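/- For the Yule-Ornstein-Uhlenbeck model on the Yule n-tree with constant jump probability p, the expected value of Ψ^{(n)} = Σ_{i=1}^{υ^{(n)}} J̃_i exp(-2α(τ^{(n)} + T_{Ĩ_i +1} + ⋯)) satisfies, for α ≠ 1/2: E[Ψ^{(n)}] = (p/α)·(2 - (2α+1)(2αn - 2α + 2)b_{n,2α})/((n-1)(2α-1)), where b_{n,2α} = ∏_{k=1}^n k/(k+2α). In particular n·E[Ψ^{(n)}] → 2p/(α(2α-1)) when α > 1/2. -/

import Mathlib

open scoped BigOperators
open Filter

/-- `b n x = ∏_{k=1}^n k/(k+x)`. -/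
noncomputable def b (n : ℕ) (x : ℝ) : ℝ := ∏ k ∈ Finset.Icc 1 n, (k : ℝ) / (k + x)

/-- `π_{n,k} = 2(n+1)/((n-1)(k+1)(k+2))`. -/
noncomputable def piYule (n k : ℕ) : ℝ :=
  2 * ((n : ℝ) + 1) / (((n : ℝ) - 1) * ((k : ℝ) + 1) * ((k : ℝ) + 2))

/-- `E[Ψ^{(n)}] = Σ_{k=1}^{n-1} π_{n,k} Σ_{i=1}^{k-1} (2p/(i+1))·b_{n,2α}/b_{i,2α}`:
the expectation of `Ψ^{(n)} = Σ_{i=1}^{υ^{(n)}} J̃_i e^{-2α(time from the i-th common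
speciation event to the present)}` for a uniformly sampled pair of tips of the Yule n-tree
with constant jump probability p. -/
noncomputable def EPsi (α p : ℝ) (n : ℕ) : ℝ :=
  ∑ k ∈ Finset.Icc 1 (n - 1), piYule n k *
    ∑ i ∈ Finset.Icc 1 (k - 1), (2 * p / ((i : ℝ) + 1)) * (b n (2 * α) / b i (2 * α))

/-!
After factoring out `b_{n,x}` (with `x = 2α`), `E[Ψ^{(n)}]` is a double sum of
`1 / ((k+1)(k+2)(i+1) b_{i,x})`. Since `b_{i+1,x} = b_{i,x} (i+1)/(i+1+x)`, the inner sum telescopes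
to `(m+x+1)/(x(m+1)b_{m,x}) - (x+1)/x`, and the outer sum then telescopes as well, which gives the
closed form. For the limit, `b_{n,x}(n+x) = x b_{n,x-1}`, so `n b_{n,x} ≤ x b_{n,x-1} → 0` when
`x > 1`; and `b_{n,y} → 0` for `y > 0` because Bernoulli's inequality gives
`b_{n,y} ≤ (n+1)^{-y}` for `0 < y ≤ 1`.
-/

section b

variable {x : ℝ}

@[simp]
lemma b_zero (x : ℝ) : b 0 x = 1 := by simp [b]

lemma b_succ (n : ℕ) (x : ℝ) : b (n + 1) x = b n x * ((n + 1) / (n + 1 + x)) := by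
  rw [b, b, Finset.prod_Icc_succ_top (Nat.le_add_left 1 n)]
  push_cast
  rfl

lemma b_pos (n : ℕ) (hx : 0 < x) : 0 < b n x :=
  Finset.prod_pos fun k hk => by
    have hk : (0 : ℝ) < k := by exact_mod_cast (Finset.mem_Icc.mp hk).1
    positivity

lemma b_mul_add (n : ℕ) (hx : 0 < x) : b n x * (n + x) = x * b n (x - 1) := by
  induction n with
  | zero => simp
  | succ n ih =>
    rw [b_succ, b_succ]
    push_cast
    have : (n : ℝ) + 1 + (x - 1) = n + x := by ring
    rw [this]
    field_simp
    linear_combination ih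

lemma b_le_b_of_le (n : ℕ) {y : ℝ} (hy : 0 < y) (hyx : y ≤ x) : b n x ≤ b n y := by
  have hx : 0 < x := hy.trans_le hyx
  refine Finset.prod_le_prod (fun k _ => by positivity) (fun k hk => ?_)
  have hk : (0 : ℝ) < k := by exact_mod_cast (Finset.mem_Icc.mp hk).1
  exact div_le_div_of_nonneg_left hk.le (by linarith) (by linarith)

lemma div_add_le_succ_div_rpow_neg {k y : ℝ} (hk : 0 < k) (hy : 0 ≤ y) (hy1 : y ≤ 1) :
    k / (k + y) ≤ ((k + 1) / k) ^ (-y) := by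
  have bernoulli : ((k + 1) / k) ^ y ≤ (k + y) / k := by
    have h := rpow_one_add_le_one_add_mul_self (s := 1 / k)
      (by linarith [one_div_pos.2 hk]) hy hy1
    convert h using 2 <;> field_simp
  rw [Real.rpow_neg (by positivity), ← one_div, le_div_iff₀ (by positivity)]
  calc k / (k + y) * ((k + 1) / k) ^ y ≤ k / (k + y) * ((k + y) / k) := by gcongr
    _ = 1 := by field_simp

lemma b_le_rpow_neg (n : ℕ) {y : ℝ} (hy : 0 < y) (hy1 : y ≤ 1) :
    b n y ≤ ((n : ℝ) + 1) ^ (-y) := by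
  induction n with
  | zero => simp
  | succ n ih =>
    have hstep := div_add_le_succ_div_rpow_neg (k := (n : ℝ) + 1) (by positivity) hy.le hy1
    have hsplit : ((n : ℝ) + 1 + 1) ^ (-y)
        = ((n : ℝ) + 1) ^ (-y) * (((n : ℝ) + 1 + 1) / (n + 1)) ^ (-y) := by
      rw [← Real.mul_rpow (by positivity) (by positivity)]
      congr 1
      field_simp
    rw [b_succ]
    push_cast
    rw [hsplit]
    exact mul_le_mul ih hstep (by positivity) (by positivity)

lemma tendsto_b_atTop_zero (hx : 0 < x) : Tendsto (fun n : ℕ => b n x) atTop (nhds 0) := by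
  set y := min x 1
  have hy : 0 < y := lt_min hx one_pos
  have hrpow : Tendsto (fun n : ℕ => ((n : ℝ) + 1) ^ (-y)) atTop (nhds 0) :=
    (tendsto_rpow_neg_atTop hy).comp
      (tendsto_atTop_add_const_right atTop 1 tendsto_natCast_atTop_atTop)
  refine squeeze_zero (fun n => (b_pos n hx).le) (fun n => ?_) hrpow
  exact (b_le_b_of_le n hy (min_le_left _ _)).trans (b_le_rpow_neg n hy (min_le_right _ _))

lemma tendsto_natCast_mul_b_atTop_zero (hx : 1 < x) :
    Tendsto (fun n : ℕ => (n : ℝ) * b n x) atTop (nhds 0) := by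
  have hx0 : 0 < x := by linarith
  have hlim : Tendsto (fun n : ℕ => x * b n (x - 1)) atTop (nhds 0) := by
    simpa using (tendsto_b_atTop_zero (sub_pos.2 hx)).const_mul x
  refine squeeze_zero (fun n => by have := b_pos n hx0; positivity) (fun n => ?_) hlim
  nlinarith [b_mul_add n hx0, b_pos n hx0]

lemma sum_inv_succ_mul_b (hx : 0 < x) (m : ℕ) :
    ∑ i ∈ Finset.Icc 1 m, 1 / (((i : ℝ) + 1) * b i x)
      = ((m : ℝ) + x + 1) / (x * (m + 1) * b m x) - (x + 1) / x := by
  induction m with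
  | zero => simp
  | succ m ih =>
    rw [Finset.sum_Icc_succ_top (by omega), ih, b_succ]
    have := (b_pos m hx).ne'
    push_cast
    field_simp
    ring

lemma sum_inv_mul_sum_inv_succ_mul_b (hx : 0 < x) (hx1 : x ≠ 1) (m : ℕ) :
    ∑ k ∈ Finset.Icc 1 m, 1 / (((k : ℝ) + 1) * (k + 2)) *
        ∑ i ∈ Finset.Icc 1 (k - 1), 1 / (((i : ℝ) + 1) * b i x)
      = ((m : ℝ) + x + 1) / (x * (x - 1) * (m + 1) * (m + 2) * b m x)
        - (x + 1) / (2 * x * (x - 1)) - (x + 1) * m / (2 * x * (m + 2)) := by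
  have hx1' : x - 1 ≠ 0 := sub_ne_zero.mpr hx1
  induction m with
  | zero =>
    rw [Finset.Icc_eq_empty_of_lt one_pos, Finset.sum_empty, Nat.cast_zero, b_zero]
    field_simp
    ring
  | succ m ih =>
    rw [Finset.sum_Icc_succ_top (by omega), ih, Nat.add_sub_cancel, sum_inv_succ_mul_b hx, b_succ]
    have := (b_pos m hx).ne'
    push_cast
    field_simp
    ring

end b

lemma EPsi_eq_mul_sum (α p : ℝ) (hα : 0 < α) (n : ℕ) :
    EPsi α p n = 4 * p * ((n : ℝ) + 1) * b n (2 * α) / ((n : ℝ) - 1) *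
      ∑ k ∈ Finset.Icc 1 (n - 1), 1 / (((k : ℝ) + 1) * (k + 2)) *
        ∑ i ∈ Finset.Icc 1 (k - 1), 1 / (((i : ℝ) + 1) * b i (2 * α)) := by
  simp only [EPsi, piYule, Finset.mul_sum]
  refine Finset.sum_congr rfl fun k _ => Finset.sum_congr rfl fun i _ => ?_
  have := (b_pos i (by positivity : 0 < 2 * α)).ne'
  field_simp
  ring

-- At `n = 1` both sides vanish, the right one because of the junk value `x / 0 = 0`.
lemma EPsi_eq (α p : ℝ) (hα : 0 < α) (hα2 : α ≠ 1 / 2) {n : ℕ} (hn : 1 ≤ n) :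
    EPsi α p n =
      (p / α) * ((2 - (2 * α + 1) * (2 * α * (n : ℝ) - 2 * α + 2) * b n (2 * α)) /
        (((n : ℝ) - 1) * (2 * α - 1))) := by
  have hx : 0 < 2 * α := by positivity
  have hx1 : 2 * α ≠ 1 := fun h => hα2 (by linarith)
  obtain ⟨m, rfl⟩ : ∃ m, n = m + 1 := ⟨n - 1, by omega⟩
  have := (b_pos m hx).ne'
  have : 2 * α - 1 ≠ 0 := sub_ne_zero.mpr hx1
  rw [EPsi_eq_mul_sum α p hα, Nat.add_sub_cancel, sum_inv_mul_sum_inv_succ_mul_b hx hx1,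
    b_succ]
  push_cast
  field_simp
  ring

lemma tendsto_natCast_mul_EPsi (p : ℝ) {α : ℝ} (hα : 1 / 2 < α) :
    Tendsto (fun n : ℕ => (n : ℝ) * EPsi α p n) atTop
      (nhds (2 * p / (α * (2 * α - 1)))) := by
  have hα0 : 0 < α := by linarith
  have hx1 : 1 < 2 * α := by linarith
  have hratio : Tendsto (fun n : ℕ => (n : ℝ) / (n - 1)) atTop (nhds 1) := by
    simpa only [← sub_eq_add_neg] using tendsto_natCast_div_add_atTop (-1 : ℝ)
  have hremainder : Tendsto (fun n : ℕ => (2 * α * (n : ℝ) - 2 * α + 2) * b n (2 * α))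
      atTop (nhds 0) := by
    have h := ((tendsto_natCast_mul_b_atTop_zero hx1).const_mul (2 * α)).add
      ((tendsto_b_atTop_zero (by linarith : (0 : ℝ) < 2 * α)).const_mul (2 - 2 * α))
    simp only [mul_zero, add_zero] at h
    exact h.congr fun n => by ring
  have hlim := (hratio.mul (((tendsto_const_nhds (x := (2 : ℝ))).sub
    (hremainder.const_mul (2 * α + 1))).div_const (2 * α - 1))).const_mul (p / α)
  have : 2 * α - 1 ≠ 0 := by linarith
  refine Tendsto.congr' ?_ (by convert hlim using 2; field_simp; ring)
  filter_upwards [eventually_ge_atTop 2] with n hn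
  have : (n : ℝ) - 1 ≠ 0 := by linarith [(Nat.ofNat_le_cast (α := ℝ)).2 hn]
  rw [EPsi_eq α p hα0 hα.ne' (by omega)]
  field_simp

theorem stmt_16_general (α p : ℝ) (hα : 0 < α) :
    (α ≠ 1 / 2 → ∀ n : ℕ, 2 ≤ n →
      EPsi α p n =
        (p / α) * ((2 - (2 * α + 1) * (2 * α * (n : ℝ) - 2 * α + 2) * b n (2 * α)) /
          (((n : ℝ) - 1) * (2 * α - 1)))) ∧
    (1 / 2 < α → Tendsto (fun n : ℕ => (n : ℝ) * EPsi α p n) atTop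
      (nhds (2 * p / (α * (2 * α - 1))))) :=
  ⟨fun hα2 _ hn => EPsi_eq α p hα hα2 (by omega), tendsto_natCast_mul_EPsi p⟩

/-- For constant jump probability p and `α ≠ 1/2`,
`E[Ψ^{(n)}] = (p/α)·(2 - (2α+1)(2αn - 2α + 2)b_{n,2α})/((n-1)(2α-1))`;
in particular `n·E[Ψ^{(n)}] → 2p/(α(2α-1))` when `α > 1/2`. -/
theorem stmt_16 (α p : ℝ) (hα : 0 < α) (hp : 0 ≤ p) (hp1 : p ≤ 1) :
    (α ≠ 1 / 2 → ∀ n : ℕ, 2 ≤ n →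
      EPsi α p n =
        (p / α) * ((2 - (2 * α + 1) * (2 * α * (n : ℝ) - 2 * α + 2) * b n (2 * α)) /
          (((n : ℝ) - 1) * (2 * α - 1)))) ∧
    (1 / 2 < α → Tendsto (fun n : ℕ => (n : ℝ) * EPsi α p n) atTop
      (nhds (2 * p / (α * (2 * α - 1))))) :=
  stmt_16_general α p hα
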